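/- The number of Catalan tableaux of index n is the Catalan number C_n. -/

import Mathlib

/-- A Catalan tableau: a Young diagram (in English notation, rows downwards)
filled with 0/1 (`true` = 1) such that every column except the leftmost contains
exactly one 1, the leftmost column contains no 1, and no 0 has both a 1 above it
in its column and a 1 to its left in its row. -/
structure CatalanTableau where
  shape : YoungDiagram
  filling : ℕ × ℕ → Bool
  supp : ∀ c, c ∉ shape → filling c = false
  shape_nonempty : shape.cells.Nonempty
  leftCol : ∀ i, filling (i, 0) = false
  colHasOne : ∀ j, 0 < j → j < shape.rowLen 0 → ∃! i, filling (i, j) = true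
  noBadZero : ∀ i j, (i, j) ∈ shape → filling (i, j) = false →
      (∃ i' < i, filling (i', j) = true) → ¬ ∃ j' < j, filling (i, j') = true

/-- the index of a Catalan tableau: (number of rows) + (number of columns) - 1. -/
def CatalanTableau.index (t : CatalanTableau) : ℕ :=
  t.shape.colLen 0 + t.shape.rowLen 0 - 1

/-!
Record a Catalan tableau of index `n` by the height `h` of its first column and the list of its
other columns, each as the pair (height, row of its 1), so that `n = h + (number of other columns)`;
the conditions on the filling become the pairwise condition `ColumnCompat` on this list. Together
with an empty record of size `0`, the records of size `n + 1` correspond bijectively to pairs of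
records of sizes `p + q = n`, which is Catalan's recurrence. If the column after the first one has
full height `h` and its 1 in row `r`, the following columns of height `> r` come first and have
their 1 in a row `≥ r`: with their top `r` rows removed they form a record with first column of
height `h - r > 0`, and the remaining columns form a record with first column of height `r`.
Otherwise lower `h` by one and pair with the empty record.
-/
theorem List.append_inj_of_forall {α : Type*} {p : α → Bool} {A B A' B' : List α}
    (hA : ∀ a ∈ A, p a) (hA' : ∀ a ∈ A', p a)
    (hB : ∀ b ∈ B, ¬ p b) (hB' : ∀ b ∈ B', ¬ p b)
    (h : A ++ B = A' ++ B') : A = A' ∧ B = B' := by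
  refine List.append_inj h ?_
  have hcount := congrArg (List.countP p) h
  simp only [List.countP_append, List.countP_eq_length.mpr hA, List.countP_eq_length.mpr hA',
    List.countP_eq_zero.mpr hB, List.countP_eq_zero.mpr hB'] at hcount
  simpa using hcount

theorem List.Pairwise.not_of_mem_dropWhile {α : Type*} {R : α → α → Prop} {p : α → Bool}
    (hR : ∀ a b, R a b → p b → p a) {l : List α} (hl : l.Pairwise R) :
    ∀ b ∈ l.dropWhile p, ¬ p b := by
  induction l with
  | nil => simp
  | cons a t ih =>
    rw [List.pairwise_cons] at hl
    by_cases ha : p a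
    · simpa [List.dropWhile_cons, ha] using ih hl.2
    · rw [List.dropWhile_cons, if_neg ha]
      rintro b (_ | ⟨_, hb⟩) hpb
      exacts [ha hpb, ha (hR a b (hl.1 b hb) hpb)]

namespace CatalanTableau

open Finset

/-- Column `q` may stand to the right of column `p`, where a column is recorded as the pair
(height, row of its 1): heights decrease weakly, and the row of the 1 of `p`, if `q` reaches it,
is not below a 1 of `q`. -/
def ColumnCompat (p q : ℕ × ℕ) : Prop := q.1 ≤ p.1 ∧ (p.2 ≤ q.2 ∨ q.1 ≤ p.2)

def IsColumnList (h : ℕ) (l : List (ℕ × ℕ)) : Prop :=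
  l.Pairwise ColumnCompat ∧ ∀ p ∈ l, p.2 < p.1 ∧ p.1 ≤ h

/-- For `n ≥ 1`, Catalan tableaux of index `n`, recorded by the height of the first column and the
list of the other columns; `Code 0` has the single element `(0, [])`. -/
def Code (n : ℕ) : Type :=
  {x : ℕ × List (ℕ × ℕ) // IsColumnList x.1 x.2 ∧ x.1 + x.2.length = n}

namespace IsColumnList

variable {h : ℕ} {l : List (ℕ × ℕ)}

theorem eq_nil_of_zero (hl : IsColumnList 0 l) : l = [] :=
  List.eq_nil_iff_forall_not_mem.mpr fun p hp => by have := hl.2 p hp; omega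

theorem pos (hl : IsColumnList h l) (hpos : 0 < h + l.length) : 0 < h :=
  Nat.pos_of_ne_zero fun h0 => by
    subst h0
    simp [hl.eq_nil_of_zero] at hpos

theorem mono {h' : ℕ} (hl : IsColumnList h l) (hh : h ≤ h') : IsColumnList h' l :=
  ⟨hl.1, fun p hp => (hl.2 p hp).imp_right (le_trans · hh)⟩

theorem sublist {l' : List (ℕ × ℕ)} (hl : IsColumnList h l) (hs : l'.Sublist l) :
    IsColumnList h l' :=
  ⟨hl.1.sublist hs, fun p hp => hl.2 p (hs.subset hp)⟩

theorem shift (hl : IsColumnList h l) (r : ℕ) :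
    IsColumnList (h + r) (l.map (· + (r, r))) := by
  refine ⟨List.pairwise_map.mpr (hl.1.imp fun hpq => ?_), ?_⟩
  · simp only [ColumnCompat, Prod.fst_add, Prod.snd_add] at hpq ⊢
    omega
  · simp only [List.mem_map, forall_exists_index, and_imp, forall_apply_eq_imp_iff₂]
    intro p hp
    have := hl.2 p hp
    simp only [Prod.fst_add, Prod.snd_add]
    omega

end IsColumnList

theorem isColumnList_cons_iff {h : ℕ} {p : ℕ × ℕ} {l : List (ℕ × ℕ)} :
    IsColumnList h (p :: l) ↔
      (∀ q ∈ l, ColumnCompat p q) ∧ IsColumnList p.1 l ∧ p.2 < p.1 ∧ p.1 ≤ h := by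
  simp only [IsColumnList, List.pairwise_cons, List.forall_mem_cons]
  refine ⟨fun ⟨⟨hp, hl⟩, hph, hlh⟩ =>
      ⟨hp, ⟨hl, fun q hq => ⟨(hlh q hq).1, (hp q hq).1⟩⟩, hph⟩,
    fun ⟨hp, ⟨hl, hlp⟩, hph⟩ =>
      ⟨⟨hp, hl⟩, hph, fun q hq => ⟨(hlp q hq).1, (hlp q hq).2.trans hph.2⟩⟩⟩

theorem isColumnList_append_iff {h : ℕ} {l l' : List (ℕ × ℕ)} :
    IsColumnList h (l ++ l') ↔
      IsColumnList h l ∧ IsColumnList h l' ∧ ∀ p ∈ l, ∀ q ∈ l', ColumnCompat p q := by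
  simp only [IsColumnList, List.pairwise_append, List.mem_append]
  grind

def glue : ℕ × List (ℕ × ℕ) → ℕ × List (ℕ × ℕ) → ℕ × List (ℕ × ℕ)
  | (0, _), (r, lo) => (r + 1, lo)
  | (h + 1, hi), (r, lo) => (h + 1 + r, (h + 1 + r, r) :: (hi.map (· + (r, r)) ++ lo))

theorem IsColumnList.glue {x y : ℕ × List (ℕ × ℕ)} (hx : IsColumnList x.1 x.2)
    (hy : IsColumnList y.1 y.2) : IsColumnList (glue x y).1 (glue x y).2 := by
  obtain ⟨_ | h, hi⟩ := x <;> obtain ⟨r, lo⟩ := y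
  · exact hy.mono r.le_succ
  simp only [CatalanTableau.glue, isColumnList_cons_iff, isColumnList_append_iff, List.mem_append,
    List.mem_map]
  refine ⟨?_, ⟨hx.shift r, hy.mono (by omega), ?_⟩, by omega, le_rfl⟩
  · rintro q (⟨p, hp, rfl⟩ | hq)
    · have := hx.2 p hp
      simp only [ColumnCompat, Prod.fst_add, Prod.snd_add]
      omega
    · have := hy.2 q hq
      exact ⟨by omega, Or.inr this.2⟩
  · rintro _ ⟨p, hp, rfl⟩ q hq
    have := hy.2 q hq
    simp only [ColumnCompat, Prod.fst_add, Prod.snd_add]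
    omega

theorem size_glue {x : ℕ × List (ℕ × ℕ)} (hx : IsColumnList x.1 x.2)
    (y : ℕ × List (ℕ × ℕ)) :
    (glue x y).1 + (glue x y).2.length = x.1 + x.2.length + (y.1 + y.2.length) + 1 := by
  obtain ⟨_ | h, hi⟩ := x <;> obtain ⟨r, lo⟩ := y
  · have : hi = [] := hx.eq_nil_of_zero
    simp [glue, this]
    omega
  · simp [glue]
    omega

theorem eq_and_eq_of_glue_eq {x y x' y' : ℕ × List (ℕ × ℕ)} (hx : IsColumnList x.1 x.2)
    (hy : IsColumnList y.1 y.2) (hx' : IsColumnList x'.1 x'.2) (hy' : IsColumnList y'.1 y'.2)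
    (heq : glue x y = glue x' y') : x = x' ∧ y = y' := by
  obtain ⟨_ | h, hi⟩ := x <;> obtain ⟨r, lo⟩ := y <;>
    obtain ⟨_ | h', hi'⟩ := x' <;> obtain ⟨r', lo'⟩ := y' <;>
    simp only [CatalanTableau.glue, Prod.mk.injEq, List.cons.injEq] at heq ⊢
  · have : hi = [] := hx.eq_nil_of_zero
    have : hi' = [] := hx'.eq_nil_of_zero
    exact ⟨⟨trivial, by simp_all⟩, by omega, heq.2⟩
  · have := (hy.2 _ (heq.2 ▸ List.mem_cons_self)).2
    omega
  · have := (hy'.2 _ (heq.2 ▸ List.mem_cons_self)).2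
    omega
  obtain ⟨hsum, ⟨-, hr⟩, htail⟩ := heq
  subst hr
  have hshift {h : ℕ} {hi : List (ℕ × ℕ)} (hx : IsColumnList h hi) :
      ∀ q ∈ hi.map (· + (r, r)), decide (r < q.1) := by
    simp only [List.mem_map, forall_exists_index, and_imp, forall_apply_eq_imp_iff₂]
    intro p hp
    have := hx.2 p hp
    simp only [Prod.fst_add, decide_eq_true_eq]
    omega
  have hlow {lo : List (ℕ × ℕ)} (hy : IsColumnList r lo) :
      ∀ q ∈ lo, ¬ decide (r < q.1) := by
    intro q hq
    simpa using (hy.2 q hq).2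
  obtain ⟨hhi, rfl⟩ :=
    List.append_inj_of_forall (hshift hx) (hshift hx') (hlow hy) (hlow hy') htail
  exact ⟨⟨by omega, (add_left_injective _).list_map hhi⟩, rfl, rfl⟩

theorem exists_glue_eq_cons {h r : ℕ} {t : List (ℕ × ℕ)}
    (hl : IsColumnList h ((h, r) :: t)) :
    ∃ x y, IsColumnList x.1 x.2 ∧ IsColumnList y.1 y.2 ∧ glue x y = (h, (h, r) :: t) := by
  obtain ⟨hcompat, ht, hrh, -⟩ := isColumnList_cons_iff.mp hl
  simp only at ht hrh
  obtain ⟨k, hk⟩ : ∃ k, h - r = k + 1 := ⟨h - r - 1, by omega⟩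
  set P : ℕ × ℕ → Bool := fun q => decide (r < q.1)
  have hhi : ∀ q ∈ t.takeWhile P, r < q.1 ∧ r ≤ q.2 := fun q hq => by
    have hrq : r < q.1 := by simpa [P] using List.mem_takeWhile_imp hq
    have := hcompat q ((List.takeWhile_sublist P).subset hq)
    exact ⟨hrq, by simp only [ColumnCompat] at this; omega⟩
  have hlo : ∀ q ∈ t.dropWhile P, ¬ P q :=
    ht.1.not_of_mem_dropWhile fun a b hab hb => by
      simp only [P, decide_eq_true_eq] at hb ⊢
      exact hb.trans_le hab.1
  refine ⟨(k + 1, (t.takeWhile P).map (· - (r, r))), (r, t.dropWhile P),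
    ⟨?_, ?_⟩, ⟨?_, ?_⟩, ?_⟩
  · refine List.pairwise_map.mpr (((ht.sublist (List.takeWhile_sublist P)).1).imp_of_mem ?_)
    intro p q hp hq hpq
    have := hhi p hp
    have := hhi q hq
    simp only [ColumnCompat, Prod.fst_sub, Prod.snd_sub] at hpq ⊢
    omega
  · simp only [List.mem_map, forall_exists_index, and_imp, forall_apply_eq_imp_iff₂]
    intro p hp
    have := hhi p hp
    have := ht.2 p ((List.takeWhile_sublist P).subset hp)
    simp only [Prod.fst_sub, Prod.snd_sub]
    omega
  · exact (ht.sublist (List.dropWhile_sublist P)).1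
  · intro q hq
    have := hlo q hq
    exact ⟨(ht.2 q ((List.dropWhile_sublist P).subset hq)).1, by simpa [P] using this⟩
  · have hshift : ((t.takeWhile P).map (· - (r, r))).map (· + (r, r)) = t.takeWhile P := by
      rw [List.map_map]
      refine (List.map_congr_left fun q hq => ?_).trans (List.map_id _)
      have := hhi q hq
      exact Prod.ext (by simp; omega) (by simp; omega)
    simp only [glue, hshift, List.takeWhile_append_dropWhile]
    rw [show k + 1 + r = h by omega]

theorem exists_glue_eq {z : ℕ × List (ℕ × ℕ)} (hz : IsColumnList z.1 z.2)
    (hpos : 0 < z.1 + z.2.length) :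
    ∃ x y, IsColumnList x.1 x.2 ∧ IsColumnList y.1 y.2 ∧ glue x y = z := by
  obtain ⟨h, l⟩ := z
  by_cases hfull : ∃ r t, l = (h, r) :: t
  · obtain ⟨r, t, rfl⟩ := hfull
    exact exists_glue_eq_cons hz
  have hh : 0 < h := hz.pos hpos
  have hlower : IsColumnList (h - 1) l := by
    rcases l with _ | ⟨⟨c, r⟩, t⟩
    · exact ⟨List.Pairwise.nil, by simp⟩
    obtain ⟨hcompat, ht, hrc, hch⟩ := isColumnList_cons_iff.mp hz
    have : c ≠ h := fun hc => hfull ⟨r, t, hc ▸ rfl⟩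
    exact isColumnList_cons_iff.mpr ⟨hcompat, ht, hrc, by simp only at hch ⊢; omega⟩
  refine ⟨(0, []), (h - 1, l), ⟨List.Pairwise.nil, by simp⟩, hlower, ?_⟩
  simp only [glue, Prod.mk.injEq, and_true]
  omega

def glueCode (n : ℕ) : (Σ pq : antidiagonal n, Code pq.1.1 × Code pq.1.2) → Code (n + 1)
  | ⟨⟨_, hpq⟩, x, y⟩ => ⟨glue x.1 y.1, x.2.1.glue y.2.1, by
      rw [size_glue x.2.1, x.2.2, y.2.2, HasAntidiagonal.mem_antidiagonal.mp hpq]⟩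

theorem glueCode_injective (n : ℕ) : Function.Injective (glueCode n) := by
  rintro ⟨⟨⟨p, q⟩, hpq⟩, x, y⟩ ⟨⟨⟨p', q'⟩, hpq'⟩, x', y'⟩ heq
  obtain ⟨hx, hy⟩ := eq_and_eq_of_glue_eq x.2.1 y.2.1 x'.2.1 y'.2.1 (congrArg Subtype.val heq)
  obtain rfl : p = p' := x.2.2.symm.trans (hx ▸ x'.2.2)
  obtain rfl : q = q' := y.2.2.symm.trans (hy ▸ y'.2.2)
  obtain rfl := Subtype.ext hx
  obtain rfl := Subtype.ext hy
  rfl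

theorem glueCode_surjective (n : ℕ) : Function.Surjective (glueCode n) := by
  rintro ⟨z, hz, hsize⟩
  obtain ⟨x, y, hx, hy, hglue⟩ := exists_glue_eq hz (by omega)
  have hpq : (x.1 + x.2.length, y.1 + y.2.length) ∈ antidiagonal n := by
    have := size_glue hx y
    rw [hglue] at this
    rw [HasAntidiagonal.mem_antidiagonal]
    omega
  exact ⟨⟨⟨_, hpq⟩, ⟨x, hx, rfl⟩, ⟨y, hy, rfl⟩⟩, Subtype.ext hglue⟩

instance : Unique (Code 0) where
  default := ⟨(0, []), ⟨List.Pairwise.nil, by simp⟩, rfl⟩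
  uniq x := by
    obtain ⟨⟨h, l⟩, hl, hsize⟩ := x
    obtain ⟨rfl, rfl⟩ : h = 0 ∧ l = [] := by simpa using hsize
    rfl

instance (n : ℕ) : Finite (Code n) := by
  induction n using Nat.strong_induction_on with
  | _ n ih =>
    cases n with
    | zero => infer_instance
    | succ n =>
      have (pq : antidiagonal n) : Finite (Code pq.1.1 × Code pq.1.2) := by
        have := ih pq.1.1 (by have := HasAntidiagonal.mem_antidiagonal.mp pq.2; omega)
        have := ih pq.1.2 (by have := HasAntidiagonal.mem_antidiagonal.mp pq.2; omega)
        infer_instance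
      exact Finite.of_surjective _ (glueCode_surjective n)

theorem card_code (n : ℕ) : Nat.card (Code n) = catalan n := by
  induction n using Nat.strong_induction_on with
  | _ n ih =>
    cases n with
    | zero => rw [Nat.card_unique, catalan_zero]
    | succ n =>
      rw [← Nat.card_eq_of_bijective _ ⟨glueCode_injective n, glueCode_surjective n⟩,
        Nat.card_sigma, catalan_succ', ← sum_coe_sort (antidiagonal n)]
      refine sum_congr rfl fun pq _ => ?_
      have := HasAntidiagonal.mem_antidiagonal.mp pq.2
      rw [Nat.card_prod, ih _ (by omega), ih _ (by omega)]

attribute [ext] CatalanTableau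

section Columns

variable (t : CatalanTableau)

/-- The row of the 1 in column `j`; meaningful only for `0 < j < t.shape.rowLen 0`. -/
noncomputable def oneRow (j : ℕ) : ℕ := Classical.epsilon fun i => t.filling (i, j) = true

theorem filling_eq_true_iff {i j : ℕ} (hj0 : 0 < j) (hj : j < t.shape.rowLen 0) :
    t.filling (i, j) = true ↔ i = t.oneRow j := by
  obtain ⟨i₀, hi₀, huniq⟩ := t.colHasOne j hj0 hj
  have hone : t.filling (t.oneRow j, j) = true :=
    Classical.epsilon_spec (p := fun i => t.filling (i, j) = true) ⟨i₀, hi₀⟩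
  exact ⟨fun hi => (huniq i hi).trans (huniq _ hone).symm, fun hi => hi ▸ hone⟩

theorem mem_shape_of_filling {c : ℕ × ℕ} (hc : t.filling c = true) : c ∈ t.shape := by
  by_contra hnot
  simp [t.supp c hnot] at hc

theorem oneRow_lt_colLen {j : ℕ} (hj0 : 0 < j) (hj : j < t.shape.rowLen 0) :
    t.oneRow j < t.shape.colLen j :=
  YoungDiagram.mem_iff_lt_colLen.mp
    (t.mem_shape_of_filling ((t.filling_eq_true_iff hj0 hj).mpr rfl))

theorem oneRow_le_or_colLen_le {j' j : ℕ} (hj' : 0 < j') (hjj : j' < j)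
    (hj : j < t.shape.rowLen 0) :
    t.oneRow j' ≤ t.oneRow j ∨ t.shape.colLen j ≤ t.oneRow j' := by
  by_contra! hbad
  have hzero : t.filling (t.oneRow j', j) = false := by
    rw [← Bool.not_eq_true, t.filling_eq_true_iff (by omega) hj]
    exact hbad.1.ne'
  exact t.noBadZero _ _ (YoungDiagram.mem_iff_lt_colLen.mpr hbad.2) hzero
    ⟨t.oneRow j, hbad.1, (t.filling_eq_true_iff (by omega) hj).mpr rfl⟩
    ⟨j', hjj, (t.filling_eq_true_iff hj' (hjj.trans hj)).mpr rfl⟩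

theorem zero_zero_mem_shape : (0, 0) ∈ t.shape := by
  obtain ⟨c, hc⟩ := t.shape_nonempty
  exact t.shape.up_left_mem (Nat.zero_le c.1) (Nat.zero_le c.2)
    ((YoungDiagram.mem_cells c).mp hc)

theorem rowLen_zero_pos : 0 < t.shape.rowLen 0 :=
  YoungDiagram.mem_iff_lt_rowLen.mp t.zero_zero_mem_shape

theorem colLen_zero_pos : 0 < t.shape.colLen 0 :=
  YoungDiagram.mem_iff_lt_colLen.mp t.zero_zero_mem_shape

noncomputable def columns : List (ℕ × ℕ) :=
  (List.range (t.shape.rowLen 0 - 1)).map fun j => (t.shape.colLen (j + 1), t.oneRow (j + 1))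

@[simp]
theorem length_columns : t.columns.length = t.shape.rowLen 0 - 1 := by
  simp [columns]

@[simp]
theorem getElem_columns {j : ℕ} (hj : j < t.columns.length) :
    t.columns[j] = (t.shape.colLen (j + 1), t.oneRow (j + 1)) := by
  simp [columns]

theorem isColumnList_columns : IsColumnList (t.shape.colLen 0) t.columns := by
  refine ⟨List.pairwise_map.mpr (List.pairwise_lt_range.imp_of_mem fun hi hj hij => ?_), ?_⟩
  · rw [List.mem_range] at hi hj
    exact ⟨t.shape.colLen_anti _ _ (by omega),
      t.oneRow_le_or_colLen_le (Nat.succ_pos _) (by omega) (by omega)⟩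
  · simp only [columns, List.mem_map, List.mem_range, forall_exists_index, and_imp,
      forall_apply_eq_imp_iff₂]
    exact fun j hj => ⟨t.oneRow_lt_colLen (Nat.succ_pos j) (by omega),
      t.shape.colLen_anti _ _ (Nat.zero_le _)⟩

theorem colLen_zero_add_length_columns : t.shape.colLen 0 + t.columns.length = t.index := by
  have := t.rowLen_zero_pos
  rw [length_columns, index]
  omega

end Columns

theorem IsColumnList.sortedGE_heights {h : ℕ} {l : List (ℕ × ℕ)} (hl : IsColumnList h l) :
    (h :: l.map Prod.fst).SortedGE := by
  refine List.Pairwise.sortedGE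
    (List.pairwise_cons.mpr ⟨?_, List.pairwise_map.mpr (hl.1.imp And.left)⟩)
  simp only [List.mem_map, forall_exists_index, and_imp, forall_apply_eq_imp_iff₂]
  exact fun p hp => (hl.2 p hp).2

def ones (l : List (ℕ × ℕ)) : ℕ × ℕ → Bool
  | (_, 0) => false
  | (i, j + 1) => l[j]?.map Prod.snd == some i

theorem ones_succ_eq_true_iff {l : List (ℕ × ℕ)} {i j : ℕ} :
    ones l (i, j + 1) = true ↔ ∃ hj : j < l.length, l[j].2 = i := by
  rcases Nat.lt_or_ge j l.length with hj | hj
  · simp [ones, hj]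
  · simp [ones, hj.not_gt]

theorem ones_eq_true_iff {l : List (ℕ × ℕ)} {c : ℕ × ℕ} :
    ones l c = true ↔ ∃ j, ∃ hj : j < l.length, c = (l[j].2, j + 1) := by
  obtain ⟨i, _ | j⟩ := c
  · simp [ones]
  · rw [ones_succ_eq_true_iff]
    aesop

section OfColumns

variable {h : ℕ} {l : List (ℕ × ℕ)} (hl : IsColumnList h l)

def columnShape : YoungDiagram := (YoungDiagram.ofRowLens _ hl.sortedGE_heights).transpose

theorem mem_columnShape_zero {i : ℕ} : (i, 0) ∈ columnShape hl ↔ i < h := by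
  simp [columnShape, YoungDiagram.mem_transpose, YoungDiagram.mem_ofRowLens]

theorem mem_columnShape_succ {i j : ℕ} :
    (i, j + 1) ∈ columnShape hl ↔ ∃ hj : j < l.length, i < l[j].1 := by
  simp [columnShape, YoungDiagram.mem_transpose, YoungDiagram.mem_ofRowLens]

theorem colLen_columnShape_zero : (columnShape hl).colLen 0 = h := by
  rw [columnShape, YoungDiagram.colLen_transpose]
  exact YoungDiagram.rowLen_ofRowLens (w := h :: l.map Prod.fst) ⟨0, by simp⟩

theorem colLen_columnShape_succ {j : ℕ} (hj : j < l.length) :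
    (columnShape hl).colLen (j + 1) = l[j].1 := by
  rw [columnShape, YoungDiagram.colLen_transpose]
  exact (YoungDiagram.rowLen_ofRowLens (w := h :: l.map Prod.fst) ⟨j + 1, by simpa⟩).trans
    (by simp)

theorem rowLen_columnShape (hh : 0 < h) : (columnShape hl).rowLen 0 = l.length + 1 := by
  rw [columnShape, YoungDiagram.rowLen_transpose, ← YoungDiagram.length_rowLens,
    YoungDiagram.rowLens_length_ofRowLens, List.length_cons, List.length_map]
  simp only [List.mem_cons, List.mem_map]
  rintro _ (rfl | ⟨p, hp, rfl⟩)
  exacts [hh, (Nat.zero_le _).trans_lt (hl.2 p hp).1]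

@[simps]
noncomputable def ofColumns (hh : 0 < h) : CatalanTableau where
  shape := columnShape hl
  filling := ones l
  supp c := by
    contrapose!
    intro hc
    obtain ⟨j, hj, rfl⟩ := ones_eq_true_iff.mp (by simpa using hc)
    exact (mem_columnShape_succ hl).mpr ⟨hj, (hl.2 _ (List.getElem_mem hj)).1⟩
  shape_nonempty := ⟨(0, 0), (mem_columnShape_zero hl).mpr hh⟩
  leftCol _ := rfl
  colHasOne j hj0 hj := by
    obtain ⟨j, rfl⟩ := Nat.exists_eq_add_one_of_ne_zero hj0.ne'
    have hj : j < l.length := by rw [rowLen_columnShape hl hh] at hj; omega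
    exact ⟨l[j].2, ones_succ_eq_true_iff.mpr ⟨hj, rfl⟩,
      fun i hi => (ones_succ_eq_true_iff.mp hi).2.symm⟩
  noBadZero := by
    rintro i _ hmem - ⟨_, hi', hone⟩ ⟨_, hj', hleft⟩
    obtain ⟨k, hk, hik⟩ := ones_eq_true_iff.mp hone
    obtain ⟨k', hk', hik'⟩ := ones_eq_true_iff.mp hleft
    simp only [Prod.mk.injEq] at hik hik'
    obtain ⟨rfl, rfl⟩ := hik
    have hcompat := List.pairwise_iff_getElem.mp hl.1 k' k hk' hk (by omega)
    have := ((mem_columnShape_succ hl).mp hmem).2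
    unfold ColumnCompat at hcompat
    omega

theorem index_ofColumns (hh : 0 < h) : (ofColumns hl hh).index = h + l.length := by
  rw [index, ofColumns_shape, colLen_columnShape_zero, rowLen_columnShape hl hh]
  omega

theorem columns_ofColumns (hh : 0 < h) : (ofColumns hl hh).columns = l := by
  have hlen : (ofColumns hl hh).shape.rowLen 0 = l.length + 1 := rowLen_columnShape hl hh
  refine List.ext_getElem (by simp only [length_columns, hlen]; omega) fun j hj hj' => ?_
  rw [getElem_columns]
  refine Prod.ext (colLen_columnShape_succ hl hj') ?_
  refine (((ofColumns hl hh).filling_eq_true_iff (Nat.succ_pos j) (by omega)).mp ?_).symm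
  exact ones_succ_eq_true_iff.mpr ⟨hj', rfl⟩

end OfColumns

theorem ofColumns_columns (t : CatalanTableau) (hl : IsColumnList (t.shape.colLen 0) t.columns)
    (hh : 0 < t.shape.colLen 0) : ofColumns hl hh = t := by
  ext1
  · rw [ofColumns_shape, columnShape, YoungDiagram.transpose_eq_iff_eq_transpose,
      ← YoungDiagram.ofRowLens_to_rowLens_eq_self (μ := t.shape.transpose)]
    congr 1
    have := t.rowLen_zero_pos
    rw [YoungDiagram.rowLens, YoungDiagram.colLen_transpose,
      show t.shape.rowLen 0 = t.shape.rowLen 0 - 1 + 1 by omega, List.range_succ_eq_map]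
    simp [columns, YoungDiagram.rowLen_transpose]
  · funext ⟨i, j⟩
    rcases j with _ | j
    · exact (t.leftCol i).symm
    rw [ofColumns_filling, Bool.eq_iff_iff, ones_succ_eq_true_iff]
    by_cases hj : j + 1 < t.shape.rowLen 0
    · rw [t.filling_eq_true_iff (Nat.succ_pos j) hj]
      simp [eq_comm]
      omega
    · refine iff_of_false (fun ⟨hj', _⟩ => by simp at hj'; omega) fun hone => hj ?_
      exact YoungDiagram.mem_iff_lt_rowLen.mp
        (t.shape.up_left_mem (Nat.zero_le i) le_rfl (t.mem_shape_of_filling hone))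

noncomputable def equivCode (n : ℕ) (hn : 1 ≤ n) :
    {t : CatalanTableau // t.index = n} ≃ Code n where
  toFun t := ⟨(t.1.shape.colLen 0, t.1.columns), t.1.isColumnList_columns,
    t.1.colLen_zero_add_length_columns.trans t.2⟩
  invFun x := ⟨ofColumns x.2.1 (x.2.1.pos (by rw [x.2.2]; omega)), by
    rw [index_ofColumns, x.2.2]⟩
  left_inv t := Subtype.ext (ofColumns_columns t.1 _ t.1.colLen_zero_pos)
  right_inv x := Subtype.ext (Prod.ext (colLen_columnShape_zero x.2.1)
    (columns_ofColumns x.2.1 (x.2.1.pos (by rw [x.2.2]; omega))))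

end CatalanTableau

/-- the number of Catalan tableaux of index `n` is the Catalan
number `C_n`. -/
theorem catalanTableau_card (n : ℕ) (hn : 1 ≤ n) :
    Nat.card {t : CatalanTableau // t.index = n} = catalan n := by
  rw [Nat.card_congr (CatalanTableau.equivCode n hn), CatalanTableau.card_code]
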